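/- arXiv:1207.0208 — 3 statements merged into one kernel-verified Lean document; each statement's English description precedes it below -/
import Mathlib

section
/- Let A₀ be a Dedekind domain with fraction field K₀, Y = Spec A₀, and let D₁,…,D_r be ℚ-divisors on Y. Then the ℕ^r-graded A₀-algebra B = ⊕_{(n₁,…,n_r)∈ℕ^r} H⁰(Y, O_Y(⌊ Σ_{i=1}^r n_i D_i ⌋)), regarded as a subalgebra of the monoid algebra ⊕_{(n₁,…,n_r)∈ℕ^r} K₀·t₁^{n₁}⋯t_r^{n_r} = K₀[t₁,…,t_r], is a finitely generated A₀-algebra. -/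
noncomputable section

/-- `H⁰(Y, O_Y(⌊D⌋))` of a `ℚ`-divisor `D` on a "curve" with points `C` and
normalized valuations `ord`. -/
def H0Set {C K₀ : Type*} [Field K₀] (ord : C → K₀ → ℤ) (D : C → ℚ) : Set K₀ :=
  {f | f = 0 ∨ ∀ z : C, 0 ≤ ord z f + ⌊D z⌋}

end
noncomputable section

open IsDedekindDomain

/- the normalized discrete valuation `ord_z` on `K₀` attached to a maximal ideal
(= height-one prime) `z` of the Dedekind domain `A₀` (junk value `0` at `f = 0`). -/
open Classical in
noncomputable def ordAt {A₀ : Type*} [CommRing A₀] [IsDedekindDomain A₀]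
    {K₀ : Type*} [Field K₀] [Algebra A₀ K₀] [IsFractionRing A₀ K₀]
    (z : HeightOneSpectrum A₀) (f : K₀) : ℤ :=
  if h : z.valuation K₀ f = 0 then 0 else -Multiplicative.toAdd (WithZero.unzero h)

end

open IsDedekindDomain

/-! Let `N > 0` be a common denominator of the `Dᵢ`. Since `⌊D + E⌋ = ⌊D⌋ + E` for an integral
divisor `E`, the degree `d + N eᵢ` piece of `B`, a fractional ideal of `A₀`, is the product of the
degree `d` and degree `N eᵢ` pieces. Every piece is a finitely generated `A₀`-module because `A₀`
is noetherian, so `B` is generated by finitely many generators of its pieces of degree in the box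
`[0, N]ʳ`. -/

open IsDedekindDomain.HeightOneSpectrum FractionalIdeal
open scoped nonZeroDivisors

section Dedekind

variable {A : Type*} [CommRing A] [IsDedekindDomain A] {K : Type*} [Field K] [Algebra A K]
  [IsFractionRing A K]

theorem ordAt_eq_of_valuation_eq_exp {z : HeightOneSpectrum A} {f : K} {n : ℤ}
    (h : z.valuation K f = WithZero.exp n) : ordAt z f = -n := by
  have hne : z.valuation K f ≠ 0 := h ▸ WithZero.exp_ne_zero
  rw [ordAt, dif_neg hne, neg_inj]
  have : WithZero.unzero hne = Multiplicative.ofAdd n := by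
    rw [← WithZero.coe_inj, WithZero.coe_unzero, h]; rfl
  rw [this, toAdd_ofAdd]

theorem count_spanSingleton_eq_ordAt (z : HeightOneSpectrum A) {f : K} (hf : f ≠ 0) :
    count K z (spanSingleton A⁰ f) = ordAt z f := by
  obtain ⟨n, d, hd, rfl⟩ := IsFractionRing.div_surjective (A := A) f
  have hn : n ≠ 0 := by rintro rfl; simp at hf
  have hd0 : d ≠ 0 := nonZeroDivisors.ne_zero hd
  set cnt : A → ℤ := fun a =>
    (Associates.mk z.asIdeal).count (Associates.mk (Ideal.span {a})).factors
  have hcount :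
      count K z (spanSingleton A⁰ (algebraMap A K n / algebraMap A K d)) = cnt n - cnt d :=
    count_well_defined K z (spanSingleton_ne_zero_iff.mpr hf) <| by
      rw [coeIdeal_span_singleton, spanSingleton_mul_spanSingleton, div_eq_inv_mul]
  rw [hcount, ordAt_eq_of_valuation_eq_exp (n := cnt d - cnt n)]
  · ring
  · rw [map_div₀, valuation_of_algebraMap, valuation_of_algebraMap, intValuation_if_neg _ hn,
      intValuation_if_neg _ hd0, ← WithZero.exp_sub]
    congr 1
    ring

variable (K) in
noncomputable def divisorIdeal (e : HeightOneSpectrum A →₀ ℤ) : FractionalIdeal A⁰ K :=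
  e.prod fun v n => (v.asIdeal : FractionalIdeal A⁰ K) ^ n

theorem divisorIdeal_ne_zero (e : HeightOneSpectrum A →₀ ℤ) : divisorIdeal K e ≠ 0 :=
  Finset.prod_ne_zero_iff.mpr fun v _ => zpow_ne_zero _ (coeIdeal_ne_zero.mpr v.ne_bot)

theorem count_divisorIdeal (v : HeightOneSpectrum A) (e : HeightOneSpectrum A →₀ ℤ) :
    count K v (divisorIdeal K e) = e v :=
  count_finsuppProd K v e

theorem divisorIdeal_add (e e' : HeightOneSpectrum A →₀ ℤ) :
    divisorIdeal K (e + e') = divisorIdeal K e * divisorIdeal K e' :=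
  Finsupp.prod_add_index' (fun _ => zpow_zero _)
    fun v _ _ => zpow_add₀ (coeIdeal_ne_zero.mpr v.ne_bot) _ _

theorem divisorIdeal_le_one {e : HeightOneSpectrum A →₀ ℤ} (he : 0 ≤ e) :
    divisorIdeal K e ≤ 1 := by
  refine Finset.prod_le_one' fun v _ => ?_
  lift e v to ℕ using he v with n
  rw [zpow_natCast, ← coeIdeal_pow]
  exact coeIdeal_le_one

theorem divisorIdeal_antitone :
    Antitone (divisorIdeal K : (HeightOneSpectrum A →₀ ℤ) → FractionalIdeal A⁰ K) := by
  intro e e' h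
  obtain ⟨k, hk, rfl⟩ : ∃ k, 0 ≤ k ∧ e' = e + k := ⟨e' - e, sub_nonneg.mpr h, by abel⟩
  rw [divisorIdeal_add]
  exact mul_le_of_le_one_right' (divisorIdeal_le_one hk)

theorem eq_of_forall_count_eq {I J : FractionalIdeal A⁰ K} (hI : I ≠ 0) (hJ : J ≠ 0)
    (h : ∀ v, count K v I = count K v J) : I = J := by
  rw [← finprod_heightOneSpectrum_factorization' (K := K) hI,
    ← finprod_heightOneSpectrum_factorization' (K := K) hJ]
  exact finprod_congr fun v => by rw [h v]

theorem spanSingleton_eq_divisorIdeal {f : K} (hf : f ≠ 0) :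
    ∃ e, spanSingleton A⁰ f = divisorIdeal K e ∧ ∀ v, e v = ordAt v f := by
  have hspan : spanSingleton A⁰ f ≠ 0 := spanSingleton_ne_zero_iff.mpr hf
  set e := Finsupp.ofSupportFinite _ (Filter.eventually_cofinite.mp (finite_factors (K := K)
    (spanSingleton A⁰ f)))
  have he : ∀ v, e v = count K v (spanSingleton A⁰ f) := fun _ => rfl
  refine ⟨e, eq_of_forall_count_eq hspan (divisorIdeal_ne_zero e) fun v => ?_, fun v => ?_⟩
  · rw [count_divisorIdeal, he]
  · rw [he, count_spanSingleton_eq_ordAt v hf]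

theorem mem_divisorIdeal_iff {f : K} (hf : f ≠ 0) (e : HeightOneSpectrum A →₀ ℤ) :
    f ∈ divisorIdeal K e ↔ ∀ v, e v ≤ ordAt v f := by
  have hspan : spanSingleton A⁰ f ≠ 0 := spanSingleton_ne_zero_iff.mpr hf
  refine ⟨fun hmem v => ?_, fun h => ?_⟩
  · have := count_mono K v hspan (spanSingleton_le_iff_mem.mpr hmem)
    rwa [count_divisorIdeal, count_spanSingleton_eq_ordAt v hf] at this
  · obtain ⟨e', he', hord⟩ := spanSingleton_eq_divisorIdeal (A := A) hf
    refine spanSingleton_le_iff_mem.mp ?_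
    rw [he']
    exact divisorIdeal_antitone fun v => (hord v).symm ▸ h v

variable (K) in
noncomputable def sectionsIdeal (D : HeightOneSpectrum A →₀ ℚ) : FractionalIdeal A⁰ K :=
  divisorIdeal K (D.mapRange (fun q => -⌊q⌋) (by simp))

theorem mem_sectionsIdeal_iff (D : HeightOneSpectrum A →₀ ℚ) (f : K) :
    f ∈ sectionsIdeal K D ↔ f ∈ H0Set ordAt ⇑D := by
  by_cases hf : f = 0
  · simp only [hf, H0Set, FractionalIdeal.zero_mem, Set.mem_ofPred_eq, true_or]
  · simp only [sectionsIdeal, mem_divisorIdeal_iff hf, Finsupp.mapRange_apply, H0Set,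
      Set.mem_ofPred_eq, hf, false_or]
    exact forall_congr' fun v => by omega

theorem sectionsIdeal_add_of_forall_eq_intCast {D E : HeightOneSpectrum A →₀ ℚ}
    (hE : ∀ v, ∃ n : ℤ, E v = n) :
    sectionsIdeal K (D + E) = sectionsIdeal K D * sectionsIdeal K E := by
  rw [sectionsIdeal, sectionsIdeal, sectionsIdeal, ← divisorIdeal_add]
  congr 1
  ext v
  obtain ⟨n, hn⟩ := hE v
  simp only [Finsupp.mapRange_apply, Finsupp.add_apply, hn, Int.floor_add_intCast,
    Int.floor_intCast]
  ring

end Dedekind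

namespace MvPolynomial

variable {R K σ : Type*} [CommSemiring R] [CommSemiring K] [Algebra R K]

theorem monomial_mem_adjoin_of_mem_span (d : σ →₀ ℕ) {s : Set K} {a : K}
    (ha : a ∈ Submodule.span R s) :
    monomial d a ∈ Algebra.adjoin R (monomial d '' s) := by
  apply Algebra.span_le_adjoin R
  rw [← LinearMap.coe_restrictScalars R (monomial d), Submodule.span_image]
  exact Submodule.mem_map_of_mem ha

theorem monomial_mem_of_forall_coeff_mem {B : Subalgebra R (MvPolynomial σ K)}
    {M : (σ →₀ ℕ) → Submodule R K} (hB : ∀ p, p ∈ B ↔ ∀ d, coeff d p ∈ M d)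
    {d : σ →₀ ℕ} {a : K} (ha : a ∈ M d) : monomial d a ∈ B := by
  classical
  refine (hB _).mpr fun d' => ?_
  rw [coeff_monomial]
  split_ifs with h
  · exact h ▸ ha
  · exact zero_mem _

theorem subalgebra_fg_of_forall_coeff_mem [Finite σ] (B : Subalgebra R (MvPolynomial σ K))
    (M : (σ →₀ ℕ) → Submodule R K) (hB : ∀ p, p ∈ B ↔ ∀ d, coeff d p ∈ M d)
    (hM : ∀ d, (M d).FG) {N : ℕ} (hN : 0 < N)
    (hmul : ∀ d i, M (d + Finsupp.single i N) ≤ M d * M (Finsupp.single i N)) :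
    B.FG := by
  classical
  choose T hT using hM
  set box := Set.Iic (Finsupp.equivFunOnFinite.symm fun _ : σ => N)
  set S := ⋃ d ∈ box, monomial d '' (T d : Set K)
  have hS : ∀ d, ∀ a ∈ M d, monomial d a ∈ Algebra.adjoin R S := by
    intro d
    induction d using WellFoundedLT.induction with
    | _ d ih =>
    intro a ha
    by_cases hd : d ∈ box
    · refine Algebra.adjoin_mono (Set.subset_biUnion_of_mem hd) ?_
      exact monomial_mem_adjoin_of_mem_span d (hT d ▸ ha)
    · obtain ⟨i, hi⟩ : ∃ i, N < d i := by simpa [box, Finsupp.le_def] using hd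
      obtain ⟨d', rfl⟩ := exists_add_of_le (Finsupp.single_le_iff.mpr hi.le)
      have hd' : d' < Finsupp.single i N + d' :=
        lt_add_of_pos_left _ (pos_iff_ne_zero.mpr (Finsupp.single_ne_zero.mpr hN.ne'))
      have hsingle : Finsupp.single i N < Finsupp.single i N + d' := by
        refine lt_add_of_pos_right _ (pos_iff_ne_zero.mpr fun h => ?_)
        simp [h] at hi
      rw [add_comm] at ha ⊢
      refine Submodule.mul_induction_on (hmul d' i ha) (fun x hx y hy => ?_)
        (fun _ _ => by simpa only [map_add] using add_mem)
      rw [← monomial_mul]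
      exact mul_mem (ih d' hd' x hx) (ih _ hsingle y hy)
  refine Subalgebra.fg_def.mpr ⟨S, ?_, le_antisymm ?_ fun p hp => ?_⟩
  · exact (Set.finite_Iic _).biUnion fun d _ => (T d).finite_toSet.image _
  · refine Algebra.adjoin_le (Set.iUnion₂_subset fun d _ => ?_)
    rintro _ ⟨x, hx, rfl⟩
    exact monomial_mem_of_forall_coeff_mem hB (hT d ▸ Submodule.subset_span hx)
  · rw [p.as_sum]
    exact Subalgebra.sum_mem _ fun d _ => hS d _ ((hB p).mp hp d)

end MvPolynomial

theorem exists_common_denominator {ι X : Type*} [Fintype ι] (D : ι → X →₀ ℚ) :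
    ∃ N : ℕ, 0 < N ∧ ∀ i x, ∃ n : ℤ, (N : ℚ) * D i x = n := by
  classical
  refine ⟨∏ i, ∏ x ∈ (D i).support, (D i x).den,
    Finset.prod_pos fun i _ => Finset.prod_pos fun x _ => (D i x).pos, fun i x => ?_⟩
  obtain ⟨k, hk⟩ : (D i x).den ∣ ∏ i, ∏ x ∈ (D i).support, (D i x).den := by
    by_cases hx : x ∈ (D i).support
    · exact (Finset.dvd_prod_of_mem _ hx).trans
        (Finset.dvd_prod_of_mem (fun i => ∏ x ∈ (D i).support, (D i x).den) (Finset.mem_univ i))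
    · simp [Finsupp.notMem_support_iff.mp hx]
  refine ⟨(D i x).num * k, ?_⟩
  rw [hk, Int.cast_mul, ← Rat.mul_den_eq_num]
  push_cast
  ring

/-- For `ℚ`-divisors `D₁, …, D_r` on `Y = Spec A₀`, `A₀` a Dedekind
domain with fraction field `K₀`, the `ℕ^r`-graded algebra
`B = ⊕_{(n₁,…,n_r)} H⁰(Y, O_Y(⌊Σ nᵢ Dᵢ⌋))`, viewed inside `K₀[t₁,…,t_r]`, is a
finitely generated `A₀`-algebra. -/
theorem multigraded_sections_algebra_finitely_generated
    (A₀ : Type*) [CommRing A₀] [IsDedekindDomain A₀]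
    (K₀ : Type*) [Field K₀] [Algebra A₀ K₀] [IsFractionRing A₀ K₀]
    (r : ℕ) (D : Fin r → (HeightOneSpectrum A₀ →₀ ℚ))
    (B : Subalgebra A₀ (MvPolynomial (Fin r) K₀))
    (hB : (B : Set (MvPolynomial (Fin r) K₀)) =
      {p | ∀ d : Fin r →₀ ℕ,
        MvPolynomial.coeff d p ∈
          H0Set (ordAt (K₀ := K₀)) (fun z => ∑ i, (d i : ℚ) * D i z)}) :
    B.FG := by
  obtain ⟨N, hN, hND⟩ := exists_common_denominator D
  let δ (d : Fin r →₀ ℕ) : HeightOneSpectrum A₀ →₀ ℚ := ∑ i, (d i : ℚ) • D i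
  have hδ_add (d : Fin r →₀ ℕ) (i : Fin r) :
      δ (d + Finsupp.single i N) = δ d + δ (Finsupp.single i N) := by
    simp only [δ, Finsupp.add_apply, Nat.cast_add, add_smul, Finset.sum_add_distrib]
  have hδ_single (i : Fin r) (z : HeightOneSpectrum A₀) :
      δ (Finsupp.single i N) z = N * D i z := by
    simp [δ, Finsupp.single_apply]
  refine MvPolynomial.subalgebra_fg_of_forall_coeff_mem B (fun d => sectionsIdeal K₀ (δ d))
    (fun p => ?_) (fun d => fg_of_isNoetherianRing le_rfl _) hN fun d i => ?_
  · rw [← SetLike.mem_coe, hB]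
    refine forall_congr' fun d => ?_
    rw [FractionalIdeal.mem_coe, mem_sectionsIdeal_iff]
    congr! 2
    ext z
    simp [δ]
  · rw [hδ_add, sectionsIdeal_add_of_forall_eq_intCast fun z => hδ_single i z ▸ hND i z,
      FractionalIdeal.coe_mul]
end

section
/- Let (m₁,e₁),…,(m_r,e_r) ∈ M × ℤ with the m_i nonzero and generating the lattice M, and let ω = Cone(m₁,…,m_r) ⊂ M_ℚ. Let Δ = {v ∈ N_ℚ : ⟨m_i, v⟩ ≥ −e_i for i = 1,…,r} and assume Δ is nonempty. Let L = ℚ_{≥0}·m be a half-line contained in ω, where m is the primitive generator of L ∩ M (so m generates the semigroup L ∩ M). Let p : ℚ^r → M_ℚ be the linear map sending the i-th standard basis vector to m_i, let ℋ_L be the Hilbert basis of the cone p^{-1}(L) ∩ (ℚ_{≥0})^r in the lattice ℤ^r, let ℋ_L^* = {(s₁,…,s_r) ∈ ℋ_L : Σ_i s_i m_i ≠ 0}, and for s ∈ ℋ_L^* let λ(s) be the unique positive integer with Σ_i s_i m_i = λ(s)·m. Then the set ℋ_L^* is finite and nonempty, the minimum min_{v∈Δ}⟨m, v⟩ exists,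 and min_{v∈Δ}⟨m, v⟩ = −min_{s∈ℋ_L^*} (Σ_{i=1}^r s_i e_i)/λ(s). -/
noncomputable section

open scoped BigOperators

/-- coordinatewise embedding of the lattice `ℤⁿ` into `ℚⁿ`. -/
def ιQ {n : ℕ} (m : Fin n → ℤ) : Fin n → ℚ := fun i => (m i : ℚ)

/-- the duality pairing on `ℚⁿ`. -/
def pairQ {n : ℕ} (m v : Fin n → ℚ) : ℚ := ∑ i, m i * v i

/-- the convex cone generated by a set. -/
def coneHull {n : ℕ} (S : Set (Fin n → ℚ)) : Set (Fin n → ℚ) :=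
  {v | ∃ (T : Finset (Fin n → ℚ)) (c : (Fin n → ℚ) → ℚ),
    ↑T ⊆ S ∧ (∀ x, 0 ≤ c x) ∧ v = ∑ x ∈ T, c x • x}

/-- a polyhedral cone: a cone generated by finitely many vectors. -/
def IsPolyhedralCone {n : ℕ} (σ : Set (Fin n → ℚ)) : Prop :=
  ∃ T : Finset (Fin n → ℚ), σ = coneHull ↑T

/-- a strongly convex cone contains no line. -/
def StronglyConvex {n : ℕ} (σ : Set (Fin n → ℚ)) : Prop :=
  ∀ v ∈ σ, -v ∈ σ → v = 0

/-- the dual cone. -/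
def dualCone {n : ℕ} (σ : Set (Fin n → ℚ)) : Set (Fin n → ℚ) :=
  {m | ∀ v ∈ σ, 0 ≤ pairQ m v}

/-- `P ∈ Pol_σ(N_ℚ)`: `P` is the Minkowski sum of the convex hull of a nonempty
finite set with the cone `σ`. -/
def IsSigmaPolyhedron {n : ℕ} (σ P : Set (Fin n → ℚ)) : Prop :=
  ∃ Q : Finset (Fin n → ℚ), Q.Nonempty ∧
    P = {x | ∃ q ∈ convexHull ℚ (↑Q : Set (Fin n → ℚ)), ∃ s ∈ σ, x = q + s}

/- `min_{v ∈ Δ} ⟨m, v⟩` (junk value `0` if the minimum does not exist). -/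
open Classical in
noncomputable def polyMin {n : ℕ} (m : Fin n → ℚ) (Δ : Set (Fin n → ℚ)) : ℚ :=
  if h : ∃ r, IsLeast ((fun v => pairQ m v) '' Δ) r then h.choose else 0

/-- A `σ`-polyhedral divisor on a "curve" with point set `C`. -/
structure PolyDiv (n : ℕ) (σ : Set (Fin n → ℚ)) (C : Type*) where
  Δ : C → Set (Fin n → ℚ)
  isPoly : ∀ z, IsSigmaPolyhedron σ (Δ z)
  finite_ne : {z | Δ z ≠ σ}.Finite

/-- the evaluation `𝔇(m)` of a polyhedral divisor at a lattice point `m`, a `ℚ`-divisor. -/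
noncomputable def PolyDiv.eval {n : ℕ} {σ : Set (Fin n → ℚ)} {C : Type*}
    (𝔇 : PolyDiv n σ C) (m : Fin n → ℤ) (z : C) : ℚ :=
  polyMin (ιQ m) (𝔇.Δ z)

/-- the carrier set of the algebra `A₀[𝔇] = ⊕_{m ∈ σ^∨ ∩ M} H⁰(⌊𝔇(m)⌋)·χ^m`
inside the group algebra `K₀[M]`. -/
def polyDivCarrier {n : ℕ} {σ : Set (Fin n → ℚ)} {C K₀ : Type*} [Field K₀]
    (ord : C → K₀ → ℤ) (𝔇 : PolyDiv n σ C) : Set (AddMonoidAlgebra K₀ (Fin n → ℤ)) :=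
  {f | ∀ m : Fin n → ℤ, f.coeff m ≠ 0 → ιQ m ∈ dualCone σ ∧ f.coeff m ∈ H0Set ord (𝔇.eval m)}

/-- the `m`-th graded piece `A_m ⊆ K₀` of a subalgebra of the group algebra `K₀[M]`. -/
def gradePiece {K₀ : Type*} [Field K₀] {n : ℕ} {R : Type*} [CommRing R]
    [Algebra R (AddMonoidAlgebra K₀ (Fin n → ℤ))]
    (A : Subalgebra R (AddMonoidAlgebra K₀ (Fin n → ℤ))) (m : Fin n → ℤ) : Set K₀ :=
  {c | AddMonoidAlgebra.single m c ∈ A}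

/-- a subalgebra of `K₀[M]` is `M`-graded if it contains all homogeneous components
of its elements. -/
def IsGradedSub {K₀ : Type*} [Field K₀] {n : ℕ} {R : Type*} [CommRing R]
    [Algebra R (AddMonoidAlgebra K₀ (Fin n → ℤ))]
    (A : Subalgebra R (AddMonoidAlgebra K₀ (Fin n → ℤ))) : Prop :=
  ∀ f ∈ A, ∀ m : Fin n → ℤ, AddMonoidAlgebra.single m (f.coeff m) ∈ A

/-- `Frac A = Frac S`: every element of `S` is a ratio of two elements of `A`. -/
def SameFrac {R S : Type*} [CommRing R] [CommRing S] [Algebra R S]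
    (A : Subalgebra R S) : Prop :=
  ∀ x : S, ∃ a ∈ A, ∃ b ∈ A, b ≠ 0 ∧ x * b = a

/-- the set of weights of a graded subalgebra of `K₀[M]`. -/
def weightSet {K₀ : Type*} [Field K₀] {n : ℕ} {R : Type*} [CommRing R]
    [Algebra R (AddMonoidAlgebra K₀ (Fin n → ℤ))]
    (A : Subalgebra R (AddMonoidAlgebra K₀ (Fin n → ℤ))) : Set (Fin n → ℤ) :=
  {m | ∃ c : K₀, c ≠ 0 ∧ AddMonoidAlgebra.single m c ∈ A}

/-- minimum of a finite set of rationals (junk value `0` on the empty set). -/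
noncomputable def finMin (s : Finset ℚ) : ℚ := if h : s.Nonempty then s.min' h else 0

end

/-!
Write `τ = p⁻¹(L) ∩ ℤ^r_{≥0}` and `p(s) = λ(s) m` for `s ∈ τ`. Pairing with `v ∈ Δ` gives
`λ(s) ⟨m, v⟩ ≥ -∑ sᵢ eᵢ`, so `⟨m, v⟩ ≥ -μ` where `μ` is the least ratio `(∑ sᵢ eᵢ) / λ(s)` over
`ℋ_L^*`. Conversely `s ↦ ∑ sᵢ eᵢ - μ λ(s)` is additive on `τ` and nonnegative on `ℋ_L` (on the
elements with `λ = 0` because `Δ ≠ ∅`), hence nonnegative on `τ` and, after clearing denominators,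
on every rational nonnegative combination of the `mᵢ` lying on `L`. Farkas' lemma turns this into
a point of `Δ` where `⟨m, v⟩ = -μ`. Finiteness of `ℋ_L` is Dickson's lemma: `s ↦ (s, λ(s))` maps
`ℋ_L` to an antichain of `ℕ^r × ℕ`.
-/

open Matrix

theorem Finset.exists_forall_le_and_forall_le {α : Type*} [LinearOrder α] [Nonempty α]
    {L U : Finset α} (h : ∀ a ∈ L, ∀ b ∈ U, a ≤ b) :
    ∃ x, (∀ a ∈ L, a ≤ x) ∧ ∀ b ∈ U, x ≤ b := by
  by_cases hL : L.Nonempty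
  · exact ⟨L.max' hL, fun a ha => L.le_max' a ha, h _ (L.max'_mem hL)⟩
  by_cases hU : U.Nonempty
  · exact ⟨U.min' hU, by simp_all, fun b hb => U.min'_le b hb⟩
  · exact ⟨Classical.arbitrary α, by simp_all, by simp_all⟩

theorem Matrix.mulVec_snoc {R J : Type*} [CommSemiring R] [Fintype J] {n : ℕ}
    (A : Matrix J (Fin (n + 1)) R) (w : Fin n → R) (x : R) :
    A *ᵥ Fin.snoc w x = A.submatrix id Fin.castSucc *ᵥ w + x • fun j => A j (Fin.last n) := by
  ext j
  simp [mulVec, dotProduct, Fin.sum_univ_castSucc, mul_comm x]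

namespace FourierMotzkin

variable {𝕜 : Type*} [Field 𝕜] [LinearOrder 𝕜] {J : Type*} [DecidableEq J]

/-- Rows of the system obtained by eliminating a variable whose coefficients are `α`: the old rows
not involving it, and the pairs of old rows in which it has opposite signs. -/
abbrev Row (α : J → 𝕜) : Type _ := {j // α j = 0} ⊕ {p : J × J // 0 < α p.1 ∧ α p.2 < 0}

def weights (α : J → 𝕜) : Matrix (Row α) J 𝕜
  | .inl j => Pi.single j.1 1
  | .inr p => (-α p.1.2) • Pi.single p.1.1 1 + α p.1.1 • Pi.single p.1.2 1

variable (α : J → 𝕜)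

theorem weights_nonneg [IsStrictOrderedRing 𝕜] (k : Row α) (i : J) : 0 ≤ weights α k i := by
  rcases k with j | ⟨⟨j, k⟩, hj, hk⟩ <;>
    simp only [weights, Pi.add_apply, Pi.smul_apply, Pi.single_apply, smul_eq_mul] <;>
    split_ifs <;> linarith

variable [Fintype J]

@[simp] theorem weights_mulVec_inl (x : J → 𝕜) (j : {j // α j = 0}) :
    (weights α *ᵥ x) (.inl j) = x j := by
  simp [weights, mulVec]

@[simp] theorem weights_mulVec_inr (x : J → 𝕜) (p : {p : J × J // 0 < α p.1 ∧ α p.2 < 0}) :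
    (weights α *ᵥ x) (.inr p) = -α p.1.2 * x p.1.1 + α p.1.1 * x p.1.2 := by
  change weights α (.inr p) ⬝ᵥ x = _
  simp [weights, add_dotProduct, smul_dotProduct]

theorem weights_mulVec_self : weights α *ᵥ α = 0 := by
  ext (j | p)
  · simpa using j.2
  · simp only [weights_mulVec_inr, Pi.zero_apply]; ring

theorem exists_le_add_mul_of_weights_mulVec_le [IsStrictOrderedRing 𝕜] {b d : J → 𝕜}
    (h : weights α *ᵥ b ≤ weights α *ᵥ d) : ∃ x, ∀ j, b j ≤ d j + α j * x := by
  obtain ⟨x, hlow, hup⟩ := Finset.exists_forall_le_and_forall_le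
    (L := (Finset.univ.filter fun j => 0 < α j).image fun j => (b j - d j) / α j)
    (U := (Finset.univ.filter fun k => α k < 0).image fun k => (b k - d k) / α k) (by
      simp only [Finset.mem_image, Finset.mem_filter, Finset.mem_univ, true_and]
      rintro _ ⟨j, hj, rfl⟩ _ ⟨k, hk, rfl⟩
      have := h (.inr ⟨(j, k), hj, hk⟩)
      simp only [weights_mulVec_inr] at this
      rw [div_le_iff₀ hj, div_mul_eq_mul_div, le_div_iff_of_neg hk]
      linarith)
  refine ⟨x, fun j => ?_⟩
  rcases lt_trichotomy (α j) 0 with hj | hj | hj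
  · have := hup _ (Finset.mem_image_of_mem _ (by simpa using hj))
    rw [le_div_iff_of_neg hj] at this
    linarith
  · simpa [hj] using h (.inl ⟨j, hj⟩)
  · have := hlow _ (Finset.mem_image_of_mem _ (by simpa using hj))
    rw [div_le_iff₀ hj] at this
    linarith

end FourierMotzkin

section Farkas

variable {𝕜 : Type*} [Field 𝕜] [LinearOrder 𝕜] [IsStrictOrderedRing 𝕜]

/-- **Farkas' lemma**, by Fourier–Motzkin elimination of the last variable. -/
theorem Matrix.exists_farkas_certificate :
    ∀ {n : ℕ} {J : Type*} [Fintype J] (A : Matrix J (Fin n) 𝕜) (b : J → 𝕜),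
      (¬∃ v, b ≤ A *ᵥ v) → ∃ y, 0 ≤ y ∧ y ᵥ* A = 0 ∧ 0 < y ⬝ᵥ b
  | 0, J, _, A, b, h => by
    classical
    obtain ⟨j, hj⟩ : ∃ j, 0 < b j := by
      by_contra! hb
      exact h ⟨0, fun j => by simpa using hb j⟩
    exact ⟨Pi.single j 1, Pi.single_nonneg.2 zero_le_one, Subsingleton.elim _ _, by simpa⟩
  | n + 1, J, _, A, b, h => by
    classical
    set α : J → 𝕜 := fun j => A j (Fin.last n)
    set W := FourierMotzkin.weights α
    have heliminated : ¬∃ w, W *ᵥ b ≤ (W * A.submatrix id Fin.castSucc) *ᵥ w := by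
      rintro ⟨w, hw⟩
      rw [← mulVec_mulVec] at hw
      obtain ⟨x, hx⟩ := FourierMotzkin.exists_le_add_mul_of_weights_mulVec_le α hw
      exact h ⟨Fin.snoc w x, fun j => by simpa [mulVec_snoc, mul_comm x] using hx j⟩
    obtain ⟨y, hy, hyA, hyb⟩ := exists_farkas_certificate _ _ heliminated
    refine ⟨y ᵥ* W, fun j => ?_, ?_, by rwa [← dotProduct_mulVec]⟩
    · exact Finset.sum_nonneg fun k _ => mul_nonneg (hy k) (FourierMotzkin.weights_nonneg α k j)
    · ext i
      refine Fin.lastCases ?_ (fun i => ?_) i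
      · change (y ᵥ* W) ⬝ᵥ α = 0
        rw [← dotProduct_mulVec, FourierMotzkin.weights_mulVec_self, dotProduct_zero]
      · change ((y ᵥ* W) ᵥ* A.submatrix id Fin.castSucc) i = 0
        rw [vecMul_vecMul]
        exact congrFun hyA i

/-- LP duality, in the direction producing a point of the polyhedron. -/
theorem exists_mem_polyhedron_dotProduct_le {ι : Type*} [Fintype ι] {n : ℕ}
    (a : ι → Fin n → 𝕜) (b : ι → 𝕜) (c : Fin n → 𝕜) (β : 𝕜)
    (h : ∀ (y : ι → 𝕜) (z : 𝕜), 0 ≤ y → 0 ≤ z → ∑ i, y i • a i = z • c →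
      ∑ i, y i * b i ≤ z * β) :
    ∃ v, (∀ i, b i ≤ a i ⬝ᵥ v) ∧ c ⬝ᵥ v ≤ β := by
  by_contra! hv
  obtain ⟨y, hy, hyA, hyB⟩ := exists_farkas_certificate
    (fun j => j.elim (-c) a : Matrix (Option ι) (Fin n) 𝕜) (fun j => j.elim (-β) b) (by
      rintro ⟨v, hv'⟩
      have hc := hv' none
      simp only [mulVec, Option.elim, neg_dotProduct, neg_le_neg_iff] at hc
      exact (hc.trans_lt (hv v fun i => hv' (some i))).false)
  have hcomb : ∑ i, y (some i) • a i = y none • c := by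
    ext k
    have := congrFun hyA k
    simp only [vecMul, dotProduct, Fintype.sum_option, Option.elim, Pi.neg_apply,
      Pi.zero_apply] at this
    simp only [Finset.sum_apply, Pi.smul_apply, smul_eq_mul]
    linarith
  have := h (fun i => y (some i)) (y none) (fun i => hy _) (hy none) hcomb
  simp only [dotProduct, Fintype.sum_option, Option.elim] at hyB
  linarith

end Farkas

section HilbertBasis

variable {M : Type*} [AddCommMonoid M]

def hilbertBasis (S : Set M) : Set M :=
  {s | s ≠ 0 ∧ s ∈ S ∧ ¬∃ s₁ s₂ : M, s₁ ≠ 0 ∧ s₂ ≠ 0 ∧ s₁ ∈ S ∧ s₂ ∈ S ∧ s = s₁ + s₂}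

variable {S : Set M} (size : M → ℕ) (hsize : ∀ a ∈ S, ∀ b ∈ S, b ≠ 0 → size a < size (a + b))
include hsize

theorem nonneg_of_forall_mem_hilbertBasis {N : Type*} [AddCommGroup N] [PartialOrder N]
    [IsOrderedAddMonoid N] {F : M → N} (hF : ∀ a ∈ S, ∀ b ∈ S, F (a + b) = F a + F b)
    (hB : ∀ t ∈ hilbertBasis S, 0 ≤ F t) : ∀ s ∈ S, 0 ≤ F s := by
  intro s hs
  induction hk : size s using Nat.strong_induction_on generalizing s with
  | _ k ih =>
  by_cases hs0 : s = 0
  · subst hs0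
    have := hF 0 hs 0 hs
    rw [add_zero, left_eq_add] at this
    exact this.ge
  by_cases hsB : s ∈ hilbertBasis S
  · exact hB s hsB
  obtain ⟨s₁, s₂, h₁, h₂, hs₁, hs₂, rfl⟩ : ∃ s₁ s₂ : M, s₁ ≠ 0 ∧ s₂ ≠ 0 ∧ s₁ ∈ S ∧ s₂ ∈ S ∧
      s = s₁ + s₂ := by
    by_contra hirr
    exact hsB ⟨hs0, hs, hirr⟩
  rw [hF s₁ hs₁ s₂ hs₂]
  refine add_nonneg (ih _ (hk ▸ hsize s₁ hs₁ s₂ hs₂ h₂) s₁ hs₁ rfl) (ih _ ?_ s₂ hs₂ rfl)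
  exact hk ▸ add_comm s₁ s₂ ▸ hsize s₂ hs₂ s₁ hs₁ h₁

theorem exists_mem_hilbertBasis_pos {N : Type*} [AddCommGroup N] [LinearOrder N]
    [IsOrderedAddMonoid N] {F : M → N} (hF : ∀ a ∈ S, ∀ b ∈ S, F (a + b) = F a + F b)
    {s : M} (hs : s ∈ S) (hpos : 0 < F s) : ∃ t ∈ hilbertBasis S, 0 < F t := by
  by_contra! h
  have := nonneg_of_forall_mem_hilbertBasis size hsize (F := fun s => -F s)
    (fun a ha b hb => by rw [hF a ha b hb, neg_add]) (fun t ht => neg_nonneg.2 (h t ht)) s hs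
  exact (neg_nonneg.1 this).not_gt hpos

end HilbertBasis

theorem Rat.exists_pos_nat_mul_eq_intCast {ι : Type*} [Fintype ι] (y : ι → ℚ) :
    ∃ N : ℕ, 0 < N ∧ ∃ s : ι → ℤ, ∀ i, (s i : ℚ) = N * y i := by
  refine ⟨∏ i, (y i).den, Finset.prod_pos fun i _ => (y i).pos,
    fun i => ((∏ j, (y j).den) / (y i).den : ℕ) * (y i).num, fun i => ?_⟩
  have hdvd : (y i).den ∣ ∏ j, (y j).den := Finset.dvd_prod_of_mem _ (Finset.mem_univ i)
  have hN : ((∏ j, (y j).den : ℕ) : ℚ) = ((∏ j, (y j).den) / (y i).den : ℕ) * (y i).den := by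
    rw [← Nat.cast_mul, Nat.div_mul_cancel hdvd]
  simp only [Int.cast_mul, Int.cast_natCast]
  rw [hN, mul_assoc, Rat.den_mul_eq_num]

theorem exists_nonneg_sum_smul_eq_of_mem_coneHull {n : ℕ} {ι : Type*} [Fintype ι]
    [DecidableEq ι] (f : ι → Fin n → ℚ) {v : Fin n → ℚ} (hv : v ∈ coneHull (Set.range f)) :
    ∃ y : ι → ℚ, 0 ≤ y ∧ ∑ i, y i • f i = v := by
  obtain ⟨T, c, hT, hc, rfl⟩ := hv
  induction T using Finset.induction_on with
  | empty => exact ⟨0, le_rfl, by simp⟩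
  | insert x T hx ih =>
    obtain ⟨i, rfl⟩ := hT (Finset.mem_insert_self _ _)
    obtain ⟨y, hy, hyT⟩ := ih ((Finset.coe_subset.2 (Finset.subset_insert _ _)).trans hT)
    refine ⟨y + Pi.single i (c (f i)), add_nonneg hy (Pi.single_nonneg.2 (hc _)), ?_⟩
    simp [Finset.sum_insert hx, add_smul, Finset.sum_add_distrib, hyT, Pi.single_apply, add_comm]

section Embedding

variable {n : ℕ}

theorem ιQ_injective : Function.Injective (ιQ (n := n)) :=
  fun _ _ h => funext fun i => Int.cast_injective (congrFun h i)

@[simp] theorem ιQ_zero : ιQ (0 : Fin n → ℤ) = 0 := by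
  ext; simp [ιQ]

theorem ιQ_ne_zero {x : Fin n → ℤ} (hx : x ≠ 0) : ιQ x ≠ 0 :=
  fun h => hx (ιQ_injective (h.trans ιQ_zero.symm))

theorem ιQ_zsmul (c : ℤ) (x : Fin n → ℤ) : ιQ (c • x) = (c : ℚ) • ιQ x := by
  ext i; simp [ιQ]

theorem ιQ_sum_zsmul {r : ℕ} (m : Fin r → Fin n → ℤ) (s : Fin r → ℤ) :
    ιQ (∑ i, s i • m i) = ∑ i, (s i : ℚ) • ιQ (m i) := by
  ext j; simp [ιQ, Finset.sum_apply]

theorem pairQ_eq_dotProduct (u v : Fin n → ℚ) : pairQ u v = u ⬝ᵥ v := rfl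

end Embedding

section RayCone

variable {n r : ℕ} (m : Fin r → Fin n → ℤ) (m₀ : Fin n → ℤ)

/-- The lattice points of `p⁻¹(ℚ_{≥0} m₀) ∩ ℚ_{≥0}^r`. -/
def rayCone : Set (Fin r → ℤ) :=
  {s | (∀ i, 0 ≤ s i) ∧ ∃ q : ℚ, 0 ≤ q ∧ (∑ i, (s i : ℚ) • ιQ (m i)) = q • ιQ m₀}

/-- The coordinate of the orthogonal projection of `p(s)` to `ℚ m₀`; on `rayCone` it is `λ(s)`,
and it is additive everywhere. -/
def rayMult (s : Fin r → ℤ) : ℚ :=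
  (∑ i, (s i : ℚ) • ιQ (m i)) ⬝ᵥ ιQ m₀ / (ιQ m₀ ⬝ᵥ ιQ m₀)

variable {m m₀}

theorem rayMult_add (s t : Fin r → ℤ) :
    rayMult m m₀ (s + t) = rayMult m m₀ s + rayMult m m₀ t := by
  simp only [rayMult, Pi.add_apply, Int.cast_add, add_smul, Finset.sum_add_distrib,
    add_dotProduct, add_div]

theorem rayMult_eq_of_sum_smul_eq (hm₀ : m₀ ≠ 0) {s : Fin r → ℤ} {q : ℚ}
    (h : ∑ i, (s i : ℚ) • ιQ (m i) = q • ιQ m₀) : rayMult m m₀ s = q := by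
  have : ιQ m₀ ⬝ᵥ ιQ m₀ ≠ 0 := dotProduct_self_eq_zero.not.2 (ιQ_ne_zero hm₀)
  rw [rayMult, h, smul_dotProduct, smul_eq_mul, mul_div_cancel_right₀ _ this]

theorem sum_smul_eq_rayMult_smul (hm₀ : m₀ ≠ 0) {s : Fin r → ℤ} (hs : s ∈ rayCone m m₀) :
    ∑ i, (s i : ℚ) • ιQ (m i) = rayMult m m₀ s • ιQ m₀ := by
  obtain ⟨-, q, -, hq⟩ := hs
  rwa [rayMult_eq_of_sum_smul_eq hm₀ hq]

theorem rayMult_nonneg (hm₀ : m₀ ≠ 0) {s : Fin r → ℤ} (hs : s ∈ rayCone m m₀) :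
    0 ≤ rayMult m m₀ s := by
  obtain ⟨-, q, hq0, hq⟩ := hs
  rwa [rayMult_eq_of_sum_smul_eq hm₀ hq]

theorem sum_zsmul_eq_iff (hm₀ : m₀ ≠ 0) {s : Fin r → ℤ} (hs : s ∈ rayCone m m₀) (lam : ℤ) :
    ∑ i, s i • m i = lam • m₀ ↔ (lam : ℚ) = rayMult m m₀ s := by
  rw [← ιQ_injective.eq_iff, ιQ_sum_zsmul, ιQ_zsmul, sum_smul_eq_rayMult_smul hm₀ hs,
    (smul_left_injective ℚ (ιQ_ne_zero hm₀)).eq_iff, eq_comm]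

theorem rayMult_pos_iff (hm₀ : m₀ ≠ 0) {s : Fin r → ℤ} (hs : s ∈ rayCone m m₀) :
    0 < rayMult m m₀ s ↔ ∑ i, s i • m i ≠ 0 := by
  rw [(rayMult_nonneg hm₀ hs).lt_iff_ne', ne_eq, ne_eq, ← ιQ_injective.eq_iff, ιQ_sum_zsmul,
    sum_smul_eq_rayMult_smul hm₀ hs, ιQ_zero, smul_eq_zero, or_iff_left (ιQ_ne_zero hm₀)]

theorem sub_mem_rayCone (hm₀ : m₀ ≠ 0) {s t : Fin r → ℤ} (hs : s ∈ rayCone m m₀)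
    (ht : t ∈ rayCone m m₀) (hst : s ≤ t) (hmult : rayMult m m₀ s ≤ rayMult m m₀ t) :
    t - s ∈ rayCone m m₀ := by
  refine ⟨fun i => sub_nonneg.2 (hst i), rayMult m m₀ t - rayMult m m₀ s, sub_nonneg.2 hmult, ?_⟩
  simp only [Pi.sub_apply, Int.cast_sub, sub_smul, Finset.sum_sub_distrib,
    sum_smul_eq_rayMult_smul hm₀ hs, sum_smul_eq_rayMult_smul hm₀ ht]

theorem sum_toNat_lt_sum_toNat_add {s t : Fin r → ℤ} (hs : s ∈ rayCone m m₀)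
    (ht : t ∈ rayCone m m₀) (ht0 : t ≠ 0) : ∑ i, (s i).toNat < ∑ i, ((s + t) i).toNat := by
  obtain ⟨j, hj⟩ : ∃ j, t j ≠ 0 := by
    by_contra! h
    exact ht0 (funext h)
  refine Finset.sum_lt_sum (fun i _ => ?_) ⟨j, Finset.mem_univ j, ?_⟩
  · have := hs.1 i; have := ht.1 i
    simp only [Pi.add_apply]; omega
  · have := hs.1 j; have := ht.1 j
    simp only [Pi.add_apply]; omega

theorem exists_mem_rayCone_cast_eq_mul (hm₀ : m₀ ≠ 0) {y : Fin r → ℚ} {z : ℚ} (hy : 0 ≤ y)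
    (hz : 0 ≤ z) (h : ∑ i, y i • ιQ (m i) = z • ιQ m₀) :
    ∃ N : ℕ, 0 < N ∧ ∃ s ∈ rayCone m m₀, (∀ i, (s i : ℚ) = N * y i) ∧
      rayMult m m₀ s = N * z := by
  obtain ⟨N, hN, s, hs⟩ := Rat.exists_pos_nat_mul_eq_intCast y
  have hsum : ∑ i, (s i : ℚ) • ιQ (m i) = ((N : ℚ) * z) • ιQ m₀ := by
    simp only [hs, mul_smul, ← Finset.smul_sum, h]
  refine ⟨N, hN, s, ⟨fun i => ?_, N * z, by positivity, hsum⟩, hs,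
    rayMult_eq_of_sum_smul_eq hm₀ hsum⟩
  have : (0 : ℚ) ≤ s i := (hs i).symm ▸ mul_nonneg (Nat.cast_nonneg N) (hy i)
  exact_mod_cast this

theorem exists_mem_hilbertBasis_sum_zsmul_ne_zero (hm₀ : m₀ ≠ 0)
    (hL : ιQ m₀ ∈ coneHull (Set.range fun i => ιQ (m i))) :
    ∃ t ∈ hilbertBasis (rayCone m m₀), ∑ i, t i • m i ≠ 0 := by
  classical
  obtain ⟨y, hy, hyL⟩ := exists_nonneg_sum_smul_eq_of_mem_coneHull _ hL
  obtain ⟨N, hN, s, hs, -, hsN⟩ :=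
    exists_mem_rayCone_cast_eq_mul hm₀ hy zero_le_one (by rw [hyL, one_smul])
  obtain ⟨t, ht, htpos⟩ := exists_mem_hilbertBasis_pos _
    (fun s hs t ht => sum_toNat_lt_sum_toNat_add hs ht) (F := rayMult m m₀)
    (fun s _ t _ => rayMult_add s t) hs (by rw [hsN, mul_one]; exact_mod_cast hN)
  exact ⟨t, ht, (rayMult_pos_iff hm₀ ht.2.1).1 htpos⟩

variable (e : Fin r → ℤ)

theorem neg_sum_mul_le_rayMult_mul_pairQ (hm₀ : m₀ ≠ 0) {s : Fin r → ℤ}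
    (hs : s ∈ rayCone m m₀) {v : Fin n → ℚ} (hv : ∀ i, -(e i : ℚ) ≤ pairQ (ιQ (m i)) v) :
    -∑ i, (s i : ℚ) * e i ≤ rayMult m m₀ s * pairQ (ιQ m₀) v := by
  rw [pairQ_eq_dotProduct, ← smul_eq_mul, ← smul_dotProduct, ← sum_smul_eq_rayMult_smul hm₀ hs,
    sum_dotProduct, ← Finset.sum_neg_distrib]
  refine Finset.sum_le_sum fun i _ => ?_
  rw [smul_dotProduct, smul_eq_mul, ← mul_neg]
  exact mul_le_mul_of_nonneg_left (hv i) (Int.cast_nonneg (hs.1 i))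

theorem mul_rayMult_le_of_forall_hilbertBasis (hm₀ : m₀ ≠ 0)
    (hΔ : ∃ v, ∀ i, -(e i : ℚ) ≤ pairQ (ιQ (m i)) v) {μ : ℚ}
    (hμ : ∀ t ∈ hilbertBasis (rayCone m m₀), 0 < rayMult m m₀ t →
      μ * rayMult m m₀ t ≤ ∑ i, (t i : ℚ) * e i) :
    ∀ s ∈ rayCone m m₀, μ * rayMult m m₀ s ≤ ∑ i, (s i : ℚ) * e i := by
  obtain ⟨v, hv⟩ := hΔ
  have := nonneg_of_forall_mem_hilbertBasis _ (fun s hs t ht => sum_toNat_lt_sum_toNat_add hs ht)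
    (F := fun s => ∑ i, (s i : ℚ) * e i - μ * rayMult m m₀ s) (fun s _ t _ => by
      simp only [rayMult_add, Pi.add_apply, Int.cast_add, add_mul, Finset.sum_add_distrib]; ring)
    (fun t htB => by
      rcases (rayMult_nonneg hm₀ htB.2.1).eq_or_lt with h0 | hpos
      · have := neg_sum_mul_le_rayMult_mul_pairQ e hm₀ htB.2.1 hv
        rw [← h0] at this ⊢
        linarith
      · exact sub_nonneg.2 (hμ t htB hpos))
  exact fun s hs => sub_nonneg.1 (this s hs)

theorem isLeast_pairQ_image_polyhedron (hm₀ : m₀ ≠ 0) {μ : ℚ}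
    (hμ : ∀ s ∈ rayCone m m₀, μ * rayMult m m₀ s ≤ ∑ i, (s i : ℚ) * e i)
    {t : Fin r → ℤ} (ht : t ∈ rayCone m m₀) (htpos : 0 < rayMult m m₀ t)
    (hteq : ∑ i, (t i : ℚ) * e i = μ * rayMult m m₀ t) :
    IsLeast ((fun v => pairQ (ιQ m₀) v) '' {v | ∀ i, -(e i : ℚ) ≤ pairQ (ιQ (m i)) v}) (-μ) := by
  have hlower : ∀ v, (∀ i, -(e i : ℚ) ≤ pairQ (ιQ (m i)) v) → -μ ≤ pairQ (ιQ m₀) v := by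
    intro v hv
    have := neg_sum_mul_le_rayMult_mul_pairQ e hm₀ ht hv
    rw [hteq] at this
    exact le_of_mul_le_mul_left (by linarith) htpos
  obtain ⟨v, hv, hvμ⟩ := exists_mem_polyhedron_dotProduct_le (fun i => ιQ (m i))
    (fun i => -(e i : ℚ)) (ιQ m₀) (-μ) fun y z hy hz hyz => by
      obtain ⟨N, hN, s, hs, hsy, hsz⟩ := exists_mem_rayCone_cast_eq_mul hm₀ hy hz hyz
      have := hμ s hs
      simp only [hsz, hsy, mul_assoc, ← Finset.mul_sum] at this
      simp only [mul_neg, Finset.sum_neg_distrib, neg_le_neg_iff]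
      nlinarith [(Nat.cast_pos.2 hN : (0 : ℚ) < N)]
  exact ⟨⟨v, hv, le_antisymm hvμ (hlower v hv)⟩, by rintro _ ⟨v, hv, rfl⟩; exact hlower v hv⟩

variable (hprim : ∀ m'' : Fin n → ℤ, (∃ q : ℚ, 0 ≤ q ∧ ιQ m'' = q • ιQ m₀) →
  ∃ c : ℕ, m'' = c • m₀)
include hprim

theorem exists_natCast_eq_rayMult (hm₀ : m₀ ≠ 0) {s : Fin r → ℤ} (hs : s ∈ rayCone m m₀) :
    ∃ c : ℕ, (c : ℚ) = rayMult m m₀ s := by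
  obtain ⟨c, hc⟩ := hprim (∑ i, s i • m i) ⟨rayMult m m₀ s, rayMult_nonneg hm₀ hs,
    by rw [ιQ_sum_zsmul, sum_smul_eq_rayMult_smul hm₀ hs]⟩
  exact ⟨c, by exact_mod_cast (sum_zsmul_eq_iff hm₀ hs c).1 (by rw [hc, natCast_zsmul])⟩

theorem existsUnique_pos_zsmul (hm₀ : m₀ ≠ 0) {s : Fin r → ℤ} (hs : s ∈ rayCone m m₀)
    (hs0 : ∑ i, s i • m i ≠ 0) : ∃! lam : ℤ, 0 < lam ∧ ∑ i, s i • m i = lam • m₀ := by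
  obtain ⟨c, hc⟩ := exists_natCast_eq_rayMult hprim hm₀ hs
  have hpos : (0 : ℚ) < c := hc ▸ (rayMult_pos_iff hm₀ hs).2 hs0
  refine ⟨c, ⟨by exact_mod_cast hpos, (sum_zsmul_eq_iff hm₀ hs c).2 (by exact_mod_cast hc)⟩,
    fun lam ⟨_, h⟩ => ?_⟩
  exact_mod_cast ((sum_zsmul_eq_iff hm₀ hs lam).1 h).trans hc.symm

theorem finite_hilbertBasis_rayCone (hm₀ : m₀ ≠ 0) : (hilbertBasis (rayCone m m₀)).Finite := by
  let Φ : (Fin r → ℤ) → (Fin r → ℕ) × ℕ := fun s => (fun i => (s i).toNat, ⌊rayMult m m₀ s⌋₊)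
  refine IsAntichain.finite_of_wellQuasiOrdered (r := fun s t => Φ s ≤ Φ t) ?_
    fun f => wellQuasiOrdered_le (Φ ∘ f)
  rintro s ⟨hs0, hs, -⟩ t ⟨-, ht, hirr⟩ hst ⟨hle, hfloor⟩
  obtain ⟨c, hc⟩ := exists_natCast_eq_rayMult hprim hm₀ hs
  obtain ⟨d, hd⟩ := exists_natCast_eq_rayMult hprim hm₀ ht
  have hst' : s ≤ t := fun i => by
    rw [← Int.toNat_of_nonneg (hs.1 i), ← Int.toNat_of_nonneg (ht.1 i)]
    exact Int.ofNat_le.2 (hle i)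
  have hmult : rayMult m m₀ s ≤ rayMult m m₀ t := by
    simp only [Φ, ← hc, ← hd, Nat.floor_natCast] at hfloor
    rw [← hc, ← hd]; exact_mod_cast hfloor
  exact hirr ⟨s, t - s, hs0, fun h => hst (sub_eq_zero.1 h).symm, hs,
    sub_mem_rayCone hm₀ hs ht hst' hmult, (add_sub_cancel s t).symm⟩

theorem setOf_exists_zsmul_div_eq_image (hm₀ : m₀ ≠ 0) {B : Set (Fin r → ℤ)}
    (hB : ∀ s ∈ B, s ∈ rayCone m m₀ ∧ ∑ i, s i • m i ≠ 0) :
    {q : ℚ | ∃ s ∈ B, ∃ lam : ℤ, 0 < lam ∧ ∑ i, s i • m i = lam • m₀ ∧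
      q = (∑ i, (s i : ℚ) * e i) / lam} =
      (fun s => (∑ i, (s i : ℚ) * e i) / rayMult m m₀ s) '' B := by
  ext q
  constructor
  · rintro ⟨s, hs, lam, -, hlam, rfl⟩
    exact ⟨s, hs, by rw [(sum_zsmul_eq_iff hm₀ (hB s hs).1 lam).1 hlam]⟩
  · rintro ⟨s, hs, rfl⟩
    obtain ⟨lam, ⟨hlam0, hlam⟩, -⟩ := existsUnique_pos_zsmul hprim hm₀ (hB s hs).1 (hB s hs).2
    exact ⟨s, hs, lam, hlam0, hlam, by rw [(sum_zsmul_eq_iff hm₀ (hB s hs).1 lam).1 hlam]⟩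

end RayCone

theorem min_over_polyhedron_via_Hilbert_basis_general
    (n r : ℕ) (m : Fin r → (Fin n → ℤ)) (e : Fin r → ℤ)
    -- `Δ = {v ∈ N_ℚ | ⟨m_i, v⟩ ≥ -e_i, i = 1,…,r}`, assumed nonempty
    (Δ : Set (Fin n → ℚ))
    (hΔ : Δ = {v : Fin n → ℚ | ∀ i, -(e i : ℚ) ≤ pairQ (ιQ (m i)) v})
    (hΔne : Δ.Nonempty)
    -- the half-line `L = ℚ_{≥0}·m₀` is contained in `ω = Cone(m₁,…,m_r)` and `m₀` is
    -- the primitive generator of the semigroup `L ∩ M`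
    (m₀ : Fin n → ℤ) (hm₀0 : m₀ ≠ 0)
    (hL : ιQ m₀ ∈ coneHull (Set.range fun i => ιQ (m i)))
    (hprim : ∀ m'' : Fin n → ℤ, (∃ q : ℚ, 0 ≤ q ∧ ιQ m'' = q • ιQ m₀) →
      ∃ c : ℕ, m'' = c • m₀)
    -- `ℋ_L` : the Hilbert basis of `p⁻¹(L) ∩ (ℚ_{≥0})^r` in the lattice `ℤ^r`
    (inTau : (Fin r → ℤ) → Prop)
    (hτ : ∀ s : Fin r → ℤ, inTau s ↔ ((∀ i, 0 ≤ s i) ∧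
      ∃ q : ℚ, 0 ≤ q ∧ (∑ i, (s i : ℚ) • ιQ (m i)) = q • ιQ m₀))
    (HB HBstar : Set (Fin r → ℤ))
    (hHB : HB = {s | s ≠ 0 ∧ inTau s ∧
      ¬∃ s₁ s₂ : Fin r → ℤ, s₁ ≠ 0 ∧ s₂ ≠ 0 ∧ inTau s₁ ∧ inTau s₂ ∧ s = s₁ + s₂})
    (hHBstar : HBstar = {s ∈ HB | (∑ i, s i • m i) ≠ 0}) :
    -- `ℋ_L^*` is finite and nonempty
    HBstar.Finite ∧ HBstar.Nonempty ∧
    -- `λ(s)` exists uniquely for `s ∈ ℋ_L^*`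
    (∀ s ∈ HBstar, ∃! lam : ℤ, 0 < lam ∧ (∑ i, s i • m i) = lam • m₀) ∧
    -- `min_{v∈Δ}⟨m₀, v⟩` exists and equals `-min_{s∈ℋ_L^*}(Σ s_i e_i)/λ(s)`
    (∃ μ : ℚ, IsLeast ((fun v => pairQ (ιQ m₀) v) '' Δ) μ ∧
      IsLeast {q : ℚ | ∃ s ∈ HBstar, ∃ lam : ℤ, 0 < lam ∧ (∑ i, s i • m i) = lam • m₀ ∧
        q = (∑ i, (s i : ℚ) * (e i : ℚ)) / (lam : ℚ)} (-μ)) := by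
  replace hHB : HB = hilbertBasis (rayCone m m₀) := hHB.trans (congrArg hilbertBasis (Set.ext hτ))
  subst hΔ hHB
  have hB : ∀ s ∈ HBstar, s ∈ rayCone m m₀ ∧ ∑ i, s i • m i ≠ 0 := by
    rw [hHBstar]
    exact fun s hs => ⟨hs.1.2.1, hs.2⟩
  have hfin : HBstar.Finite :=
    (finite_hilbertBasis_rayCone hprim hm₀0).subset (hHBstar ▸ Set.sep_subset _ _)
  have hne : HBstar.Nonempty := hHBstar ▸ exists_mem_hilbertBasis_sum_zsmul_ne_zero hm₀0 hL
  obtain ⟨t₀, ht₀, hmin⟩ := Set.exists_min_image _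
    (fun s => (∑ i, (s i : ℚ) * e i) / rayMult m m₀ s) hfin hne
  have ht₀pos := (rayMult_pos_iff hm₀0 (hB t₀ ht₀).1).2 (hB t₀ ht₀).2
  have hμ := mul_rayMult_le_of_forall_hilbertBasis e hm₀0 hΔne fun t ht htpos =>
    (le_div_iff₀ htpos).1 (hmin t (hHBstar ▸ ⟨ht, (rayMult_pos_iff hm₀0 ht.2.1).1 htpos⟩))
  refine ⟨hfin, hne, fun s hs => existsUnique_pos_zsmul hprim hm₀0 (hB s hs).1 (hB s hs).2, _,
    isLeast_pairQ_image_polyhedron e hm₀0 hμ (hB t₀ ht₀).1 ht₀pos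
      (div_mul_cancel₀ _ ht₀pos.ne').symm, ?_⟩
  rw [neg_neg, setOf_exists_zsmul_div_eq_image e hprim hm₀0 hB]
  exact ⟨Set.mem_image_of_mem _ ht₀, Set.forall_mem_image.2 hmin⟩

/-- The key convex-geometric formula: for `(m_i, e_i) ∈ M × ℤ` with
the `m_i` nonzero and generating `M`, `Δ = {v | ⟨m_i, v⟩ ≥ -e_i ∀i}` nonempty, and
`L = ℚ_{≥0}·m ⊆ ω = Cone(m₁,…,m_r)` a half-line with primitive generator `m`, the
set `ℋ_L^*` is finite and nonempty, `min_{v ∈ Δ}⟨m, v⟩` exists, and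
`min_{v ∈ Δ}⟨m, v⟩ = -min_{s ∈ ℋ_L^*} (Σ s_i e_i)/λ(s)`. -/
theorem min_over_polyhedron_via_Hilbert_basis
    (n r : ℕ) (m : Fin r → (Fin n → ℤ)) (e : Fin r → ℤ)
    (hm0 : ∀ i, m i ≠ 0)
    (hmgen : Submodule.span ℤ (Set.range m) = (⊤ : Submodule ℤ (Fin n → ℤ)))
    -- `Δ = {v ∈ N_ℚ | ⟨m_i, v⟩ ≥ -e_i, i = 1,…,r}`, assumed nonempty
    (Δ : Set (Fin n → ℚ))
    (hΔ : Δ = {v : Fin n → ℚ | ∀ i, -(e i : ℚ) ≤ pairQ (ιQ (m i)) v})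
    (hΔne : Δ.Nonempty)
    -- the half-line `L = ℚ_{≥0}·m₀` is contained in `ω = Cone(m₁,…,m_r)` and `m₀` is
    -- the primitive generator of the semigroup `L ∩ M`
    (m₀ : Fin n → ℤ) (hm₀0 : m₀ ≠ 0)
    (hL : ιQ m₀ ∈ coneHull (Set.range fun i => ιQ (m i)))
    (hprim : ∀ m'' : Fin n → ℤ, (∃ q : ℚ, 0 ≤ q ∧ ιQ m'' = q • ιQ m₀) →
      ∃ c : ℕ, m'' = c • m₀)
    -- `ℋ_L` : the Hilbert basis of `p⁻¹(L) ∩ (ℚ_{≥0})^r` in the lattice `ℤ^r`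
    (inTau : (Fin r → ℤ) → Prop)
    (hτ : ∀ s : Fin r → ℤ, inTau s ↔ ((∀ i, 0 ≤ s i) ∧
      ∃ q : ℚ, 0 ≤ q ∧ (∑ i, (s i : ℚ) • ιQ (m i)) = q • ιQ m₀))
    (HB HBstar : Set (Fin r → ℤ))
    (hHB : HB = {s | s ≠ 0 ∧ inTau s ∧
      ¬∃ s₁ s₂ : Fin r → ℤ, s₁ ≠ 0 ∧ s₂ ≠ 0 ∧ inTau s₁ ∧ inTau s₂ ∧ s = s₁ + s₂})
    (hHBstar : HBstar = {s ∈ HB | (∑ i, s i • m i) ≠ 0}) :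
    -- `ℋ_L^*` is finite and nonempty
    HBstar.Finite ∧ HBstar.Nonempty ∧
    -- `λ(s)` exists uniquely for `s ∈ ℋ_L^*`
    (∀ s ∈ HBstar, ∃! lam : ℤ, 0 < lam ∧ (∑ i, s i • m i) = lam • m₀) ∧
    -- `min_{v∈Δ}⟨m₀, v⟩` exists and equals `-min_{s∈ℋ_L^*}(Σ s_i e_i)/λ(s)`
    (∃ μ : ℚ, IsLeast ((fun v => pairQ (ιQ m₀) v) '' Δ) μ ∧
      IsLeast {q : ℚ | ∃ s ∈ HBstar, ∃ lam : ℤ, 0 < lam ∧ (∑ i, s i • m i) = lam • m₀ ∧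
        q = (∑ i, (s i : ℚ) * (e i : ℚ)) / (lam : ℚ)} (-μ)) :=
  min_over_polyhedron_via_Hilbert_basis_general n r m e Δ hΔ hΔne m₀ hm₀0 hL hprim inTau hτ HB
    HBstar hHB hHBstar
end

section
/- Let E/k be a finite Galois extension of fields with Galois group G, and let B be an integral domain that is a finitely generated E-algebra, normal (integrally closed in its fraction field), equipped with a semi-linear G-action, i.e. G acts on B by k-algebra automorphisms such that g·(λ b) = g(λ)·(g·b) for all g ∈ G, λ ∈ E, b ∈ B. Then the ring of invariants R = B^G is a finitely generated normal k-algebra, and the natural multiplication map R ⊗_k E → B is an isomorphism of E-algebras. -/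
/-!
Galois descent for vector spaces: if `Gal(E/k)` acts semilinearly on an `E`-vector space `V`,
then `E ⊗[k] V^G → V` is bijective. For injectivity, applying `∑ g, g • ·` to a relation
`∑ cᵢ • vᵢ = 0` among `k`-independent invariants (scaled by `e`) gives `∑ Tr(e cᵢ) • vᵢ = 0`,
so all `Tr(e cᵢ)` vanish, hence so do the `cᵢ` by nondegeneracy of the trace form. For
surjectivity, a linear form vanishing on `V^G` kills each invariant `∑ g, g(e) • g • v`, so by
Dedekind's independence of characters it kills `v`.

Applied to `B`, the bijection makes `B` a finite `R`-module, so `R` is finitely generated over `k`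
by Artin–Tate. An element of `Frac R` integral over `R` lies in `B` since `B` is normal, and it is
invariant because its product with a nonzero invariant denominator is.
-/

theorem sum_smul_mem_fixedPoints {G V : Type*} [Group G] [Fintype G] [AddCommMonoid V]
    [DistribMulAction G V] (v : V) : ∑ g : G, g • v ∈ MulAction.fixedPoints G V := fun h => by
  rw [Finset.smul_sum]
  exact Fintype.sum_equiv (Equiv.mulLeft h) _ _ fun g => (mul_smul h g v).symm

section GaloisDescent

variable {k E V : Type*} [Field k] [Field E] [Algebra k E] [FiniteDimensional k E]
  [AddCommGroup V] [Module E V] [DistribMulAction Gal(E/k) V] [SMulDistribClass Gal(E/k) E V]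

theorem mem_span_fixedPoints (v : V) :
    v ∈ Submodule.span E (MulAction.fixedPoints Gal(E/k) V) := by
  by_contra hv
  obtain ⟨f, hfv, hf⟩ := Submodule.exists_dual_map_eq_bot_of_notMem hv inferInstance
  have hf0 (e : E) : ∑ g : Gal(E/k), f (g • v) • (g : E → E) e = 0 := by
    have hmem := Submodule.mem_map_of_mem (f := f)
      (Submodule.subset_span (sum_smul_mem_fixedPoints (G := Gal(E/k)) (e • v)))
    rw [hf, Submodule.mem_bot, map_sum] at hmem
    simpa [smul_distrib_smul, mul_comm] using hmem
  have hdedekind : LinearIndependent E (fun g : Gal(E/k) => (g : E → E)) :=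
    LinearIndependent.comp (ι' := Gal(E/k)) (linearIndependent_monoidHom E E) (fun g => g)
      fun g h hgh => by ext x; exact DFunLike.congr_fun hgh x
  have hcoeff := Fintype.linearIndependent_iff.mp hdedekind (fun g => f (g • v))
    (funext fun e => by simpa using hf0 e) 1
  exact hfv (by simpa using hcoeff)

variable [IsGalois k E] [Module k V] [IsScalarTower k E V]

theorem sum_galois_smul_smul_of_mem_fixedPoints {v : V}
    (hv : v ∈ MulAction.fixedPoints Gal(E/k) V) (c : E) :
    ∑ g : Gal(E/k), g • (c • v) = Algebra.trace k E c • v := by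
  simp only [smul_distrib_smul, hv _, AlgEquiv.smul_def]
  rw [← Finset.sum_smul, ← trace_eq_sum_automorphisms, algebraMap_smul]

theorem LinearIndependent.of_mem_fixedPoints {ι : Type*} {v : ι → V}
    (hv : ∀ i, v i ∈ MulAction.fixedPoints Gal(E/k) V) (hli : LinearIndependent k v) :
    LinearIndependent E v := by
  rw [linearIndependent_iff']
  intro s c hc i hi
  have htrace (e : E) : Algebra.trace k E (e * c i) = 0 := by
    have hsum : ∑ j ∈ s, Algebra.trace k E (e * c j) • v j = 0 := calc
      _ = ∑ g : Gal(E/k), g • (e • ∑ j ∈ s, c j • v j) := by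
        simp only [← sum_galois_smul_smul_of_mem_fixedPoints (hv _), Finset.smul_sum, mul_smul]
        exact Finset.sum_comm
      _ = 0 := by simp [hc]
    exact linearIndependent_iff'.mp hli s _ hsum i hi
  exact (traceForm_nondegenerate k E).1 (c i) fun e => by
    simpa [mul_comm] using htrace e

theorem bijective_liftBaseChange_of_range_eq_fixedPoints {W : Type*} [AddCommGroup W]
    [Module k W] (f : W →ₗ[k] V) (hf : Function.Injective f)
    (hrange : Set.range f = MulAction.fixedPoints Gal(E/k) V) :
    Function.Bijective (f.liftBaseChange E) := by
  constructor
  · let b := Module.Basis.ofVectorSpace k W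
    let bE := Algebra.TensorProduct.basis E b
    have hli : LinearIndependent E (f ∘ b) :=
      .of_mem_fixedPoints (fun i => hrange ▸ ⟨b i, rfl⟩)
        (b.linearIndependent.map' f (LinearMap.ker_eq_bot.mpr hf))
    have : f.liftBaseChange E = bE.constr E (f ∘ b) :=
      bE.ext fun i => by
        rw [bE.constr_basis]; simp [bE, Algebra.TensorProduct.basis_apply]
    rw [this]
    exact bE.injective_constr_of_linearIndependent hli
  · rw [← LinearMap.range_eq_top, LinearMap.range_liftBaseChange, LinearMap.coe_range, hrange,
      eq_top_iff]
    exact fun v _ => mem_span_fixedPoints v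

theorem bijective_productMap_of_coe_eq_fixedPoints {B : Type*} [CommRing B] [Algebra E B]
    [Algebra k B] [IsScalarTower k E B] [DistribMulAction Gal(E/k) B]
    [SMulDistribClass Gal(E/k) E B] (R : Subalgebra k B)
    (hR : (R : Set B) = MulAction.fixedPoints Gal(E/k) B) :
    Function.Bijective
      (Algebra.TensorProduct.productMap R.val (IsScalarTower.toAlgHom k E B)) := by
  have hcomm : (Algebra.TensorProduct.productMap R.val (IsScalarTower.toAlgHom k E B)).toLinearMap
      = (R.val.toLinearMap.liftBaseChange E).restrictScalars k ∘ₗ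
        (Algebra.TensorProduct.comm k R E).toLinearMap :=
    TensorProduct.ext' fun r e => by simp [Algebra.smul_def, mul_comm]
  have hbij := bijective_liftBaseChange_of_range_eq_fixedPoints (E := E) R.val.toLinearMap
    Subtype.val_injective (by simpa using hR)
  rw [← AlgHom.coe_toLinearMap, hcomm]
  exact hbij.comp (Algebra.TensorProduct.comm k R E).bijective

end GaloisDescent

theorem Subalgebra.finite_of_surjective_productMap {k B C : Type*} [CommRing k] [CommRing B]
    [CommRing C] [Algebra k B] [Algebra k C] [Module.Finite k C] (R : Subalgebra k B)
    (f : C →ₐ[k] B) (hf : Function.Surjective (Algebra.TensorProduct.productMap R.val f)) :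
    Module.Finite R B :=
  Module.Finite.of_surjective
    (Algebra.TensorProduct.productLeftAlgHom (Algebra.ofId R B) f).toLinearMap hf

theorem Subalgebra.fg_of_finite {k B : Type*} [CommRing k] [IsNoetherianRing k] [CommRing B]
    [Algebra k B] [Algebra.FiniteType k B] (R : Subalgebra k B) [Module.Finite R B] : R.FG :=
  R.fg_top.mp <| fg_of_fg_of_fg k R B Algebra.FiniteType.out Module.Finite.fg_top
    Subtype.val_injective

theorem Subalgebra.isIntegrallyClosed_of_mul_mem {A B : Type*} [CommRing A] [CommRing B]
    [IsDomain B] [IsIntegrallyClosed B] [Algebra A B] (R : Subalgebra A B)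
    (hR : ∀ b : B, ∀ r ∈ R, r ≠ 0 → b * r ∈ R → b ∈ R) : IsIntegrallyClosed R := by
  let L := FractionRing B
  have hinj : Function.Injective (Algebra.ofId R L) :=
    (IsFractionRing.injective B L).comp Subtype.val_injective
  let f : FractionRing R →ₐ[R] L := IsFractionRing.liftAlgHom hinj
  refine (isIntegrallyClosed_iff (FractionRing R)).mpr fun {x} hx => ?_
  obtain ⟨b, hb⟩ :=
    IsIntegrallyClosed.isIntegral_iff.mp (IsIntegral.tower_top (A := B) (hx.map f))
  obtain ⟨num, den, hden, rfl⟩ := IsFractionRing.div_surjective (A := R) x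
  have hden0 : (den : B) ≠ 0 := fun h => nonZeroDivisors.ne_zero hden (Subtype.ext h)
  have hbden : b * den = num := IsFractionRing.injective B L <| by
    rw [map_mul, hb, map_div₀, f.commutes, f.commutes, IsScalarTower.algebraMap_apply R B L num,
      IsScalarTower.algebraMap_apply R B L den]
    exact div_mul_cancel₀ _ ((map_ne_zero_iff _ (IsFractionRing.injective B L)).mpr hden0)
  refine ⟨⟨b, hR b den den.2 hden0 (hbden ▸ num.2)⟩, f.injective ?_⟩
  simpa [f] using hb

theorem mem_fixedPoints_of_mul_mem_fixedPoints {G B : Type*} [Monoid G] [CommRing B] [IsDomain B]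
    [MulSemiringAction G B] {b r : B} (hr : r ∈ MulAction.fixedPoints G B) (hr0 : r ≠ 0)
    (hbr : b * r ∈ MulAction.fixedPoints G B) : b ∈ MulAction.fixedPoints G B := fun g =>
  mul_right_cancel₀ hr0 <| by rw [← hbr g, smul_mul', hr g]

/-- Let `E/k` be a finite Galois extension with Galois group `G`,
and let `B` be a finitely generated normal `E`-domain equipped with a semi-linear
`G`-action.  Then `R = B^G` is a finitely generated normal `k`-algebra and the
multiplication map `R ⊗_k E → B` is an isomorphism of `E`-algebras. -/
theorem galois_descent_for_normal_affine_algebras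
    (k E : Type*) [Field k] [Field E] [Algebra k E]
    [FiniteDimensional k E] [IsGalois k E]
    (B : Type*) [CommRing B] [IsDomain B]
    [Algebra E B] [Algebra k B] [IsScalarTower k E B]
    (hfg : Algebra.FiniteType E B)
    (hnormal : IsIntegrallyClosed B)
    -- a semi-linear action of `G = Gal(E/k)` on `B`
    (ρ : (E ≃ₐ[k] E) →* (B ≃ₐ[k] B))
    (hsemi : ∀ (g : E ≃ₐ[k] E) (lam : E) (b : B), ρ g (lam • b) = g lam • ρ g b)
    -- `R = B^G`
    (R : Subalgebra k B)
    (hR : (R : Set B) = {b : B | ∀ g : E ≃ₐ[k] E, ρ g b = b}) :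
    R.FG ∧ IsIntegrallyClosed R ∧
      Function.Bijective
        (Algebra.TensorProduct.productMap R.val (IsScalarTower.toAlgHom k E B)) := by
  let _ : MulSemiringAction Gal(E/k) B := MulSemiringAction.compHom B ρ
  have : SMulDistribClass Gal(E/k) E B := ⟨hsemi⟩
  have hfix : (R : Set B) = MulAction.fixedPoints Gal(E/k) B := hR
  have hbij := bijective_productMap_of_coe_eq_fixedPoints R hfix
  have := R.finite_of_surjective_productMap _ hbij.2
  have : Algebra.FiniteType k B := .trans inferInstance hfg
  refine ⟨R.fg_of_finite, R.isIntegrallyClosed_of_mul_mem fun b r hr hr0 hbr => ?_, hbij⟩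
  simp only [← SetLike.mem_coe, hfix] at hr hbr ⊢
  exact mem_fixedPoints_of_mul_mem_fixedPoints hr hr0 hbr
end
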